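/- For every s ∈ ℝ^{2n} and every ħ > 0, the Fourier transform of the Gaussian associated with a compatible inner product reproduces the same Gaussian: ∫_{ℝ^{2n}} e^{−g(u,u)/ħ} e^{(2i/ħ) θ(u,s)} du = ((πħ)ⁿ/√(det G)) · e^{−g(s,s)/ħ}, where the integral is a (complex-valued) Lebesgue integral and det G is the determinant of the matrix G of g in the standard basis. -/

import Mathlib

/-!
With `g(u,v) = uᵀ G v`, the substitution `u = G^{-1/2} x` turns the integral into the standard
Gaussian Fourier integral on `ℝ^{2n}`, at the cost of the Jacobian `(det G)^{-1/2}`. Since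
`J² = -1`, the phase is `θ(u,s) = -g(u, Js)`, so the transform is evaluated at `G (Js)` and yields
`exp(-g(Js,Js)/ħ)`; compatibility of `J` with `θ` gives `g(Js,Js) = g(s,s)`.
-/

open MeasureTheory Topology Filter

noncomputable section

/-- The standard symplectic form on `ℝ^{2n}`:
`θ(u,v) = Σ_{i=1}^n (u_i v_{n+i} − u_{n+i} v_i)`. -/
def stdSymp (n : ℕ) (u v : Fin (2 * n) → ℝ) : ℝ :=
  ∑ i : Fin n,
    (u ⟨i.1, by have := i.isLt; omega⟩ * v ⟨n + i.1, by have := i.isLt; omega⟩ -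
      u ⟨n + i.1, by have := i.isLt; omega⟩ * v ⟨i.1, by have := i.isLt; omega⟩)

/-- The Gram matrix of `g(u,v) = θ(u, Jv)` in the standard basis. -/
def gram (n : ℕ) (J : (Fin (2 * n) → ℝ) →ₗ[ℝ] (Fin (2 * n) → ℝ)) :
    Matrix (Fin (2 * n)) (Fin (2 * n)) ℝ :=
  Matrix.of fun i j => stdSymp n (Pi.single i 1) (J (Pi.single j 1))

open scoped Matrix

def stdSympBilin (n : ℕ) : (Fin (2 * n) → ℝ) →ₗ[ℝ] (Fin (2 * n) → ℝ) →ₗ[ℝ] ℝ :=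
  LinearMap.mk₂ ℝ (stdSymp n)
    (fun _ _ _ ↦ by
      simp only [stdSymp, Pi.add_apply, ← Finset.sum_add_distrib]
      exact Finset.sum_congr rfl fun _ _ ↦ by ring)
    (fun _ _ _ ↦ by
      simp only [stdSymp, Pi.smul_apply, smul_eq_mul, Finset.mul_sum]
      exact Finset.sum_congr rfl fun _ _ ↦ by ring)
    (fun _ _ _ ↦ by
      simp only [stdSymp, Pi.add_apply, ← Finset.sum_add_distrib]
      exact Finset.sum_congr rfl fun _ _ ↦ by ring)
    (fun _ _ _ ↦ by
      simp only [stdSymp, Pi.smul_apply, smul_eq_mul, Finset.mul_sum]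
      exact Finset.sum_congr rfl fun _ _ ↦ by ring)

theorem stdSymp_neg_right (n : ℕ) (u v : Fin (2 * n) → ℝ) :
    stdSymp n u (-v) = -stdSymp n u v :=
  map_neg (stdSympBilin n u) v

theorem stdSymp_apply_eq_dotProduct_gram_mulVec {n : ℕ}
    {J : (Fin (2 * n) → ℝ) →ₗ[ℝ] (Fin (2 * n) → ℝ)} (u v : Fin (2 * n) → ℝ) :
    stdSymp n u (J v) = u ⬝ᵥ gram n J *ᵥ v := by
  have h : LinearMap.toMatrix₂' ℝ ((stdSympBilin n).compl₂ J) = gram n J := by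
    ext i j
    simp [LinearMap.toMatrix₂'_apply, stdSympBilin, gram]
  rw [← h, ← Matrix.toLinearMap₂'_apply', Matrix.toLinearMap₂'_toMatrix']
  rfl

theorem stdSymp_eq_neg_dotProduct_gram_mulVec {n : ℕ}
    {J : (Fin (2 * n) → ℝ) →ₗ[ℝ] (Fin (2 * n) → ℝ)} (hJ : ∀ u, J (J u) = -u)
    (u v : Fin (2 * n) → ℝ) :
    stdSymp n u v = -(u ⬝ᵥ gram n J *ᵥ J v) := by
  rw [← stdSymp_apply_eq_dotProduct_gram_mulVec, hJ, stdSymp_neg_right, neg_neg]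

theorem gram_posDef {n : ℕ} {J : (Fin (2 * n) → ℝ) →ₗ[ℝ] (Fin (2 * n) → ℝ)}
    (hsymm : ∀ u v, stdSymp n u (J v) = stdSymp n v (J u))
    (hpos : ∀ u, u ≠ 0 → 0 < stdSymp n u (J u)) :
    (gram n J).PosDef := by
  refine .of_dotProduct_mulVec_pos ?_ fun x hx ↦ ?_
  · ext i j
    exact hsymm _ _
  · simpa [← stdSymp_apply_eq_dotProduct_gram_mulVec] using hpos x hx

section

open Matrix Complex Real

variable {ι : Type*} [Fintype ι] [DecidableEq ι]

theorem integral_comp_mulVec {E : Type*} [NormedAddCommGroup E] [NormedSpace ℝ E]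
    {M : Matrix ι ι ℝ} (hM : M.det ≠ 0) (f : (ι → ℝ) → E) :
    ∫ x, f (M *ᵥ x) = |M.det|⁻¹ • ∫ x, f x := by
  let e : (ι → ℝ) ≃L[ℝ] (ι → ℝ) :=
    (M.toLinearEquiv' (M.invertibleOfIsUnitDet hM.isUnit)).toContinuousLinearEquiv
  have hmap : Measure.map e volume = ENNReal.ofReal |M.det⁻¹| • volume :=
    Real.map_matrix_volume_pi_eq_smul_volume_pi hM
  calc ∫ x, f (M *ᵥ x) = ∫ y, f y ∂(Measure.map e.toHomeomorph.toMeasurableEquiv volume) := by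
        rw [integral_map_equiv]; rfl
    _ = |M.det|⁻¹ • ∫ x, f x := by
        rw [show (e.toHomeomorph.toMeasurableEquiv : (ι → ℝ) → ι → ℝ) = e from rfl, hmap,
          integral_smul_measure, ENNReal.toReal_ofReal (abs_nonneg _), abs_inv]

open scoped MatrixOrder in
theorem Matrix.PosDef.exists_transpose_mul_mul_eq_one {G : Matrix ι ι ℝ} (hG : G.PosDef) :
    ∃ B : Matrix ι ι ℝ, Bᵀ * G * B = 1 ∧ B * Bᵀ = G⁻¹ ∧ |B.det| = (√G.det)⁻¹ := by
  set A := CFC.sqrt G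
  have hAt : Aᵀ = A := by simpa using (CFC.sqrt_nonneg G).posSemidef.isHermitian.eq
  have hAA : A * A = G := CFC.sqrt_mul_sqrt_self G hG.posSemidef.nonneg
  have hdetA : A.det = √G.det := by simpa using hG.posSemidef.det_sqrt
  have hA : IsUnit A.det := by rw [hdetA]; exact (Real.sqrt_pos.mpr hG.det_pos).ne'.isUnit
  refine ⟨A⁻¹, ?_, ?_, ?_⟩
  · rw [transpose_nonsing_inv, hAt, ← hAA, Matrix.mul_assoc, Matrix.mul_assoc,
      nonsing_inv_mul_cancel_left _ _ hA, mul_nonsing_inv _ hA]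
  · rw [transpose_nonsing_inv, hAt, ← hAA, Matrix.mul_inv_rev]
  · rw [det_nonsing_inv, Ring.inverse_eq_inv', hdetA, abs_inv, abs_of_nonneg (Real.sqrt_nonneg _)]

theorem integral_cexp_neg_mul_dotProduct_mulVec_add {G : Matrix ι ι ℝ} (hG : G.PosDef) {t : ℝ}
    (ht : 0 < t) (y : ι → ℝ) :
    ∫ x : ι → ℝ, cexp (-t * (x ⬝ᵥ G *ᵥ x : ℝ) + I * (x ⬝ᵥ y : ℝ)) =
      (π / t) ^ (Fintype.card ι / 2 : ℂ) / (√G.det : ℝ) *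
        cexp (-(y ⬝ᵥ G⁻¹ *ᵥ y : ℝ) / (4 * t)) := by
  obtain ⟨B, hBGB, hBB, hdetB⟩ := hG.exists_transpose_mul_mul_eq_one
  have hdetB₀ : |B.det| ≠ 0 := by
    rw [hdetB]; exact inv_ne_zero (Real.sqrt_pos.mpr hG.det_pos).ne'
  have hquad (x : ι → ℝ) : (B *ᵥ x) ⬝ᵥ G *ᵥ (B *ᵥ x) = ∑ i, x i ^ 2 := by
    rw [dotProduct_mulVec, vecMul_mulVec, ← dotProduct_mulVec, mulVec_mulVec, hBGB, one_mulVec]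
    simp only [dotProduct, sq]
  have hlin (x : ι → ℝ) : (B *ᵥ x) ⬝ᵥ y = ∑ i, (Bᵀ *ᵥ y) i * x i := by
    rw [dotProduct_comm, dotProduct_mulVec, ← mulVec_transpose]; rfl
  have hsq : ∑ i, (I * (Bᵀ *ᵥ y) i) ^ 2 = -(y ⬝ᵥ G⁻¹ *ᵥ y : ℝ) := by
    rw [← hBB, ← mulVec_mulVec, dotProduct_mulVec, ← mulVec_transpose]
    simp only [mul_pow, I_sq, neg_one_mul, Finset.sum_neg_distrib]
    push_cast [dotProduct, sq]
    rfl
  set F : (ι → ℝ) → ℂ := fun x ↦ cexp (-t * (x ⬝ᵥ G *ᵥ x : ℝ) + I * (x ⬝ᵥ y : ℝ))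
  calc ∫ x, F x = |B.det| • ∫ x, F (B *ᵥ x) := by
        rw [integral_comp_mulVec (abs_ne_zero.mp hdetB₀), smul_smul, mul_inv_cancel₀ hdetB₀,
          one_smul]
    _ = |B.det| • ∫ x : ι → ℝ, cexp (-t * ∑ i, (x i : ℂ) ^ 2 + ∑ i, I * (Bᵀ *ᵥ y) i * x i) := by
        simp only [F, hquad, hlin]
        push_cast
        simp only [Finset.mul_sum, mul_assoc]
    _ = _ := by
        rw [GaussianFourier.integral_cexp_neg_mul_sum_add (by simpa using ht), hsq, hdetB,
          real_smul]
        push_cast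
        ring

end

/-- Fourier reproducing identity for the Gaussian of a compatible inner product:
`∫ e^{−g(u,u)/hb} e^{(2i/hb)θ(u,s)} du = ((π hb)ⁿ/√(det G)) e^{−g(s,s)/hb}`. -/
theorem statement12
    (n : ℕ) (J : (Fin (2 * n) → ℝ) →ₗ[ℝ] (Fin (2 * n) → ℝ))
    (hJ : ∀ u, J (J u) = -u)
    (hcompat : ∀ u v, stdSymp n (J u) (J v) = stdSymp n u v)
    (hsymm : ∀ u v, stdSymp n u (J v) = stdSymp n v (J u))
    (hpos : ∀ u, u ≠ 0 → 0 < stdSymp n u (J u))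
    (s : Fin (2 * n) → ℝ) (hb : ℝ) (hhb : 0 < hb) :
    ∫ u : Fin (2 * n) → ℝ,
        ((Real.exp (-(stdSymp n u (J u)) / hb) : ℝ) : ℂ) *
          Complex.exp ((2 * Complex.I / hb) * (stdSymp n u s : ℂ)) =
      (((Real.pi * hb) ^ n / Real.sqrt (gram n J).det : ℝ) : ℂ) *
        ((Real.exp (-(stdSymp n s (J s)) / hb) : ℝ) : ℂ) := by
  set G := gram n J
  have hG : G.PosDef := gram_posDef hsymm hpos
  set y : Fin (2 * n) → ℝ := -(2 / hb) • (G *ᵥ J s)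
  have hquad (u : Fin (2 * n) → ℝ) : stdSymp n u (J u) = u ⬝ᵥ G *ᵥ u :=
    stdSymp_apply_eq_dotProduct_gram_mulVec u u
  have hlin (u : Fin (2 * n) → ℝ) : 2 / hb * stdSymp n u s = u ⬝ᵥ y := by
    rw [stdSymp_eq_neg_dotProduct_gram_mulVec hJ, dotProduct_smul, smul_eq_mul]
    ring
  have hy : y ⬝ᵥ G⁻¹ *ᵥ y = (2 / hb) ^ 2 * stdSymp n s (J s) := by
    rw [Matrix.mulVec_smul, Matrix.mulVec_mulVec, Matrix.nonsing_inv_mul _ hG.det_pos.ne'.isUnit,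
      Matrix.one_mulVec, smul_dotProduct, dotProduct_smul, dotProduct_comm,
      ← stdSymp_apply_eq_dotProduct_gram_mulVec, hcompat, smul_eq_mul, smul_eq_mul]
    ring
  calc _ = ∫ u : Fin (2 * n) → ℝ,
        Complex.exp (-(hb⁻¹ : ℝ) * (u ⬝ᵥ G *ᵥ u : ℝ) + Complex.I * (u ⬝ᵥ y : ℝ)) := by
        refine integral_congr_ae (Eventually.of_forall fun u ↦ ?_)
        simp only [← hlin, ← hquad, Complex.ofReal_exp, ← Complex.exp_add]
        push_cast
        congr 1
        ring
    _ = _ := integral_cexp_neg_mul_dotProduct_mulVec_add hG (inv_pos.mpr hhb) y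
    _ = _ := by
        have hpow :
            (Real.pi / (hb⁻¹ : ℝ) : ℂ) ^ ((2 * n : ℕ) / 2 : ℂ) = ((Real.pi * hb) ^ n : ℝ) := by
          push_cast
          rw [mul_div_cancel_left₀ _ two_ne_zero, Complex.cpow_natCast, div_inv_eq_mul]
        have hexp : -(((2 / hb) ^ 2 * stdSymp n s (J s) : ℝ) : ℂ) / (4 * (hb⁻¹ : ℝ)) =
            (-stdSymp n s (J s) / hb : ℝ) := by
          push_cast
          field_simp
          ring
        rw [hy, Fintype.card_fin, hpow, hexp, Complex.ofReal_exp]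
        push_cast
        ring

end
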